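/- arXiv:1610.00333 — 7 statements merged into one kernel-verified Lean document; each statement's English description precedes it below -/
import Mathlib

section
/- Let Q ⊆ ℤ be finite and let f : Q⁵ → Q be a rotation-symmetric local rule of the form f(c,u,r,d,l) = c + g(c,u) + g(c,r) + g(c,d) + g(c,l) + h(u,r) + h(r,d) + h(d,l) + h(l,u), where g and h are antisymmetric (g(x,y) = -g(y,x), h(x,y) = -h(y,x)). If g is identically zero and f is not trivial (i.e., there exist c,u,r,d,l with f(c,u,r,d,l) ≠ c), then Q is infinite — contradiction; hence if Q is finite and g ≡ 0, then f(c,u,r,d,l) = c for all inputs. -/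
theorem trivial_of_zero_direct_flow (Q : Finset ℤ) (g h : ℤ → ℤ → ℤ)
    (f : ℤ → ℤ → ℤ → ℤ → ℤ → ℤ)
    (hganti : ∀ x ∈ Q, ∀ y ∈ Q, g x y = - g y x)
    (hhanti : ∀ x ∈ Q, ∀ y ∈ Q, h x y = - h y x)
    (hf : ∀ c u r d l : ℤ, f c u r d l =
      c + g c u + g c r + g c d + g c l + h u r + h r d + h d l + h l u)
    (hclose : ∀ c ∈ Q, ∀ u ∈ Q, ∀ r ∈ Q, ∀ d ∈ Q, ∀ l ∈ Q, f c u r d l ∈ Q)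
    (hg0 : ∀ x ∈ Q, ∀ y ∈ Q, g x y = 0) :
    ∀ c ∈ Q, ∀ u ∈ Q, ∀ r ∈ Q, ∀ d ∈ Q, ∀ l ∈ Q, f c u r d l = c := by
  intro c hc u hu r hr d hd l hl
  set δ := h u r + h r d + h d l + h l u with hδ
  have hval : ∀ q ∈ Q, f q u r d l = q + δ := by
    intro q hq
    rw [hf, hg0 q hq u hu, hg0 q hq r hr, hg0 q hq d hd, hg0 q hq l hl]
    ring
  by_cases h0 : δ = 0
  · rw [hval c hc, h0, add_zero]
  · exfalso
    have hmem : ∀ n : ℕ, c + n * δ ∈ Q := by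
      intro n
      induction n with
      | zero => simpa using hc
      | succ k ih =>
        have := hclose _ ih u hu r hr d hd l hl
        rw [hval _ ih] at this
        push_cast
        convert this using 1
        ring
    have hinj : Function.Injective (fun n : ℕ => c + n * δ) := by
      intro a b hab
      simp only at hab
      have : (a : ℤ) = b := by
        have := add_left_cancel hab
        exact mul_right_cancel₀ h0 this
      exact_mod_cast this
    have : Set.Infinite (↑Q : Set ℤ) :=
      Set.infinite_of_injective_forall_mem hinj (fun n => hmem n)
    exact this Q.finite_toSet
end

section
/- Let Q ⊆ ℤ with |Q| = 5, g, h : Q × Q → ℤ antisymmetric, and f(c,u,r,d,l) = c + Σ g(c,·) + Σ h over adjacent neighbor pairs a local rule with values in Q. If g is not identically zero, then Q is an arithmetic progression: there exist a ∈ ℤ and α > 0 (after possibly swapping the roles) such that Q = {a, a+α, a+2α, a+3α, a+4α}, and g(a, a+4α) = α, g(a+4α, a) = -α, and g(x,y) = 0 for all other pairs (x,y). -/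
lemma pair_aux (Q : Finset ℤ) (hcard : Q.card = 5) (g : ℤ → ℤ → ℤ)
    (hganti : ∀ x ∈ Q, ∀ y ∈ Q, g x y = - g y x)
    (key : ∀ c ∈ Q, ∀ x ∈ Q, ∀ y ∈ Q, ∀ z ∈ Q, c + g c x + g c y + 2 * g c z ∈ Q)
    (x : ℤ) (hx : x ∈ Q) (y : ℤ) (hy : y ∈ Q) (hb : g x y ≠ 0) :
    y = x + 4 * g x y ∧
      Q = ({x, x + g x y, x + 2 * g x y, x + 3 * g x y, x + 4 * g x y} : Finset ℤ) := by
  set β := g x y with hβdef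
  have hgxx : g x x = 0 := by have := hganti x hx x hx; linarith
  have hgyx : g y x = -β := by have := hganti x hx y hy; linarith
  have m1 : x + β ∈ Q := by
    have h1 := key x hx y hy x hx x hx
    have e : x + g x y + g x x + 2 * g x x = x + β := by rw [hgxx, ← hβdef]; ring
    rwa [e] at h1
  have m2 : x + 2 * β ∈ Q := by
    have h1 := key x hx x hx x hx y hy
    have e : x + g x x + g x x + 2 * g x y = x + 2 * β := by rw [hgxx, ← hβdef]; ring
    rwa [e] at h1
  have m3 : x + 3 * β ∈ Q := by
    have h1 := key x hx y hy x hx y hy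
    have e : x + g x y + g x x + 2 * g x y = x + 3 * β := by rw [hgxx, ← hβdef]; ring
    rwa [e] at h1
  have m4 : x + 4 * β ∈ Q := by
    have h1 := key x hx y hy y hy y hy
    have e : x + g x y + g x y + 2 * g x y = x + 4 * β := by rw [← hβdef]; ring
    rwa [e] at h1
  have hsub : ({x, x + β, x + 2 * β, x + 3 * β, x + 4 * β} : Finset ℤ) ⊆ Q := by
    intro t ht
    simp only [Finset.mem_insert, Finset.mem_singleton] at ht
    rcases ht with rfl | rfl | rfl | rfl | rfl <;> assumption
  have hc5 : ({x, x + β, x + 2 * β, x + 3 * β, x + 4 * β} : Finset ℤ).card = 5 := by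
    rw [Finset.card_insert_of_notMem (by
        simp only [Finset.mem_insert, Finset.mem_singleton]; push_neg; omega),
      Finset.card_insert_of_notMem (by
        simp only [Finset.mem_insert, Finset.mem_singleton]; push_neg; omega),
      Finset.card_insert_of_notMem (by
        simp only [Finset.mem_insert, Finset.mem_singleton]; push_neg; omega),
      Finset.card_insert_of_notMem (by simp only [Finset.mem_singleton]; omega),
      Finset.card_singleton]
  have hQeq : Q = ({x, x + β, x + 2 * β, x + 3 * β, x + 4 * β} : Finset ℤ) :=
    (Finset.eq_of_subset_of_card_le hsub (by rw [hcard, hc5])).symm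
  have hyS : y = x ∨ y = x + β ∨ y = x + 2 * β ∨ y = x + 3 * β ∨ y = x + 4 * β := by
    have := hQeq ▸ hy
    simpa only [Finset.mem_insert, Finset.mem_singleton] using this
  have m4' : y - 4 * β ∈ Q := by
    have h1 := key y hy x hx x hx x hx
    have e : y + g y x + g y x + 2 * g y x = y - 4 * β := by rw [hgyx]; ring
    rwa [e] at h1
  have hy4S : y - 4 * β = x ∨ y - 4 * β = x + β ∨ y - 4 * β = x + 2 * β ∨
      y - 4 * β = x + 3 * β ∨ y - 4 * β = x + 4 * β := by
    have := hQeq ▸ m4'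
    simpa only [Finset.mem_insert, Finset.mem_singleton] using this
  have hy4 : y = x + 4 * β := by
    rcases hyS with h | h | h | h | h <;> rcases hy4S with h' | h' | h' | h' | h' <;> omega
  exact ⟨hy4, hQeq⟩

theorem five_states_arith_progression (Q : Finset ℤ) (hcard : Q.card = 5)
    (g h : ℤ → ℤ → ℤ) (f : ℤ → ℤ → ℤ → ℤ → ℤ → ℤ)
    (hganti : ∀ x ∈ Q, ∀ y ∈ Q, g x y = - g y x)
    (hhanti : ∀ x ∈ Q, ∀ y ∈ Q, h x y = - h y x)
    (hf : ∀ c u r d l : ℤ, f c u r d l =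
      c + g c u + g c r + g c d + g c l + h u r + h r d + h d l + h l u)
    (hclose : ∀ c ∈ Q, ∀ u ∈ Q, ∀ r ∈ Q, ∀ d ∈ Q, ∀ l ∈ Q, f c u r d l ∈ Q)
    (hgne : ∃ x ∈ Q, ∃ y ∈ Q, g x y ≠ 0) :
    ∃ a α : ℤ, 0 < α ∧
      Q = ({a, a + α, a + 2 * α, a + 3 * α, a + 4 * α} : Finset ℤ) ∧
      g a (a + 4 * α) = α ∧ g (a + 4 * α) a = -α ∧
      ∀ x ∈ Q, ∀ y ∈ Q, ¬(x = a ∧ y = a + 4 * α) → ¬(x = a + 4 * α ∧ y = a) →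
        g x y = 0 := by
  -- the key closure fact
  have key : ∀ c ∈ Q, ∀ x ∈ Q, ∀ y ∈ Q, ∀ z ∈ Q, c + g c x + g c y + 2 * g c z ∈ Q := by
    intro c hc x hx y hy z hz
    have h1 := hclose c hc x hx z hz y hy z hz
    rw [hf] at h1
    have e1 := hhanti x hx z hz
    have e2 := hhanti z hz y hy
    have e : c + g c x + g c z + g c y + g c z + h x z + h z y + h y z + h z x
        = c + g c x + g c y + 2 * g c z := by linarith
    rwa [e] at h1
  -- find a pair with positive transfer
  obtain ⟨x0, hx0, y0, hy0, hg0⟩ := hgne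
  have hsign : ∃ a ∈ Q, ∃ b ∈ Q, 0 < g a b := by
    rcases hg0.lt_or_gt with hlt | hgt
    · exact ⟨y0, hy0, x0, hx0, by have := hganti x0 hx0 y0 hy0; linarith⟩
    · exact ⟨x0, hx0, y0, hy0, hgt⟩
  obtain ⟨a, ha, b, hb, hpos⟩ := hsign
  obtain ⟨hbval, hQeq⟩ := pair_aux Q hcard g hganti key a ha b hb (ne_of_gt hpos)
  refine ⟨a, g a b, hpos, hQeq, ?_, ?_, ?_⟩
  · rw [← hbval]
  · rw [← hbval]
    have := hganti a ha b hb; linarith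
  · intro x hx y hy hn1 hn2
    by_contra hβ
    obtain ⟨hyval, hQeq'⟩ := pair_aux Q hcard g hganti key x hx y hy hβ
    -- membership facts
    have hxA : x = a ∨ x = a + g a b ∨ x = a + 2 * g a b ∨ x = a + 3 * g a b ∨
        x = a + 4 * g a b := by
      have := hQeq ▸ hx
      simpa only [Finset.mem_insert, Finset.mem_singleton] using this
    have hyA : y = a ∨ y = a + g a b ∨ y = a + 2 * g a b ∨ y = a + 3 * g a b ∨
        y = a + 4 * g a b := by
      have := hQeq ▸ hy
      simpa only [Finset.mem_insert, Finset.mem_singleton] using this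
    have haB : a = x ∨ a = x + g x y ∨ a = x + 2 * g x y ∨ a = x + 3 * g x y ∨
        a = x + 4 * g x y := by
      have := hQeq' ▸ ha
      simpa only [Finset.mem_insert, Finset.mem_singleton] using this
    have hbB : b = x ∨ b = x + g x y ∨ b = x + 2 * g x y ∨ b = x + 3 * g x y ∨
        b = x + 4 * g x y := by
      have := hQeq' ▸ hb
      simpa only [Finset.mem_insert, Finset.mem_singleton] using this
    set α := g a b with hαdef
    set β := g x y with hβdef
    rcases hxA with h1 | h1 | h1 | h1 | h1 <;>
      rcases hyA with h2 | h2 | h2 | h2 | h2 <;>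
        rcases haB with h3 | h3 | h3 | h3 | h3 <;>
          rcases hbB with h4 | h4 | h4 | h4 | h4 <;> omega
end

section
/- Let Q = {0,1,2,3,4}, g antisymmetric with g(0,4) = 1 and g(x,y) = 0 for {x,y} ≠ {0,4}, h : Q × Q → ℤ antisymmetric, and suppose f(c,u,r,d,l) = c + g(c,u)+g(c,r)+g(c,d)+g(c,l) + h(u,r)+h(r,d)+h(d,l)+h(l,u) takes values in Q. Then for all x, y, z ∈ Q \ {0}, the cyclic value ĥ(x,y,z) = h(x,y) + h(y,z) + h(z,x) equals 0. -/
theorem cychNonzeroTriple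
    (g h : ℤ → ℤ → ℤ) (f : ℤ → ℤ → ℤ → ℤ → ℤ → ℤ)
    (hg04 : g 0 4 = 1) (hg40 : g 4 0 = -1)
    (hg0 : ∀ x ∈ ({0,1,2,3,4} : Finset ℤ), ∀ y ∈ ({0,1,2,3,4} : Finset ℤ),
      ¬(x = 0 ∧ y = 4) → ¬(x = 4 ∧ y = 0) → g x y = 0)
    (hhanti : ∀ x ∈ ({0,1,2,3,4} : Finset ℤ), ∀ y ∈ ({0,1,2,3,4} : Finset ℤ), h x y = - h y x)
    (hf : ∀ c u r d l : ℤ, f c u r d l =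
      c + g c u + g c r + g c d + g c l + h u r + h r d + h d l + h l u)
    (hclose : ∀ c ∈ ({0,1,2,3,4} : Finset ℤ), ∀ u ∈ ({0,1,2,3,4} : Finset ℤ),
      ∀ r ∈ ({0,1,2,3,4} : Finset ℤ), ∀ d ∈ ({0,1,2,3,4} : Finset ℤ),
      ∀ l ∈ ({0,1,2,3,4} : Finset ℤ), f c u r d l ∈ ({0,1,2,3,4} : Finset ℤ))
    (x y z : ℤ) (hx : x ∈ ({1,2,3,4} : Finset ℤ)) (hy : y ∈ ({1,2,3,4} : Finset ℤ))
    (hz : z ∈ ({1,2,3,4} : Finset ℤ)) :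
    h x y + h y z + h z x = 0 := by
  simp only [Finset.mem_insert, Finset.mem_singleton] at hx hy hz
  have hx5 : x ∈ ({0,1,2,3,4} : Finset ℤ) := by
    simp only [Finset.mem_insert, Finset.mem_singleton]; omega
  have hy5 : y ∈ ({0,1,2,3,4} : Finset ℤ) := by
    simp only [Finset.mem_insert, Finset.mem_singleton]; omega
  have hz5 : z ∈ ({0,1,2,3,4} : Finset ℤ) := by
    simp only [Finset.mem_insert, Finset.mem_singleton]; omega
  have h45 : (4:ℤ) ∈ ({0,1,2,3,4} : Finset ℤ) := by decide
  have hxx : h x x = 0 := by have := hhanti x hx5 x hx5; omega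
  have hg4 : ∀ w : ℤ, w ∈ ({0,1,2,3,4} : Finset ℤ) → w ≠ 0 → g 4 w = 0 := by
    intro w hw hw0
    exact hg0 4 h45 w hw (by omega) (by omega)
  have hgx : g 4 x = 0 := hg4 x hx5 (by omega)
  have hgy : g 4 y = 0 := hg4 y hy5 (by omega)
  have hgz : g 4 z = 0 := hg4 z hz5 (by omega)
  have c1 := hclose 4 h45 x hx5 y hy5 z hz5 x hx5
  have c2 := hclose 4 h45 x hx5 z hz5 y hy5 x hx5
  rw [hf] at c1 c2
  simp only [Finset.mem_insert, Finset.mem_singleton] at c1 c2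
  have a1 := hhanti x hx5 y hy5
  have a2 := hhanti y hy5 z hz5
  have a3 := hhanti z hz5 x hx5
  omega
end

section
/- Under the same hypotheses (Q = {0,1,2,3,4}, g supported on {0,4} with g(0,4) = 1, h antisymmetric, f with values in Q), for all x, y, z ∈ Q \ {4}, ĥ(x,y,z) = h(x,y) + h(y,z) + h(z,x) = 0. -/
theorem cychNonfourTriple
    (g h : ℤ → ℤ → ℤ) (f : ℤ → ℤ → ℤ → ℤ → ℤ → ℤ)
    (hg04 : g 0 4 = 1) (hg40 : g 4 0 = -1)
    (hg0 : ∀ x ∈ ({0,1,2,3,4} : Finset ℤ), ∀ y ∈ ({0,1,2,3,4} : Finset ℤ),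
      ¬(x = 0 ∧ y = 4) → ¬(x = 4 ∧ y = 0) → g x y = 0)
    (hhanti : ∀ x ∈ ({0,1,2,3,4} : Finset ℤ), ∀ y ∈ ({0,1,2,3,4} : Finset ℤ), h x y = - h y x)
    (hf : ∀ c u r d l : ℤ, f c u r d l =
      c + g c u + g c r + g c d + g c l + h u r + h r d + h d l + h l u)
    (hclose : ∀ c ∈ ({0,1,2,3,4} : Finset ℤ), ∀ u ∈ ({0,1,2,3,4} : Finset ℤ),
      ∀ r ∈ ({0,1,2,3,4} : Finset ℤ), ∀ d ∈ ({0,1,2,3,4} : Finset ℤ),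
      ∀ l ∈ ({0,1,2,3,4} : Finset ℤ), f c u r d l ∈ ({0,1,2,3,4} : Finset ℤ))
    (x y z : ℤ) (hx : x ∈ ({0,1,2,3} : Finset ℤ)) (hy : y ∈ ({0,1,2,3} : Finset ℤ))
    (hz : z ∈ ({0,1,2,3} : Finset ℤ)) :
    h x y + h y z + h z x = 0 := by
  simp only [Finset.mem_insert, Finset.mem_singleton] at hx hy hz
  have hx5 : x ∈ ({0,1,2,3,4} : Finset ℤ) := by
    simp only [Finset.mem_insert, Finset.mem_singleton]
    exact hx.imp id (fun h => h.imp id (fun h => h.imp id Or.inl))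
  have hy5 : y ∈ ({0,1,2,3,4} : Finset ℤ) := by
    simp only [Finset.mem_insert, Finset.mem_singleton]
    exact hy.imp id (fun h => h.imp id (fun h => h.imp id Or.inl))
  have hz5 : z ∈ ({0,1,2,3,4} : Finset ℤ) := by
    simp only [Finset.mem_insert, Finset.mem_singleton]
    exact hz.imp id (fun h => h.imp id (fun h => h.imp id Or.inl))
  have h05 : (0 : ℤ) ∈ ({0,1,2,3,4} : Finset ℤ) := by simp
  have hx4 : x ≠ 4 := by rcases hx with h|h|h|h <;> omega
  have hy4 : y ≠ 4 := by rcases hy with h|h|h|h <;> omega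
  have hz4 : z ≠ 4 := by rcases hz with h|h|h|h <;> omega
  have g0x : g 0 x = 0 := hg0 0 h05 x hx5 (fun hc => hx4 hc.2) (fun hc => by omega)
  have g0y : g 0 y = 0 := hg0 0 h05 y hy5 (fun hc => hy4 hc.2) (fun hc => by omega)
  have g0z : g 0 z = 0 := hg0 0 h05 z hz5 (fun hc => hz4 hc.2) (fun hc => by omega)
  have hxx : h x x = 0 := by have := hhanti x hx5 x hx5; linarith
  have hhxy := hhanti x hx5 y hy5
  have hhyz := hhanti y hy5 z hz5
  have hhzx := hhanti z hz5 x hx5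
  have h1 := hclose 0 h05 x hx5 x hx5 y hy5 z hz5
  have h2 := hclose 0 h05 z hz5 y hy5 x hx5 x hx5
  rw [hf] at h1 h2
  simp only [g0x, g0y, g0z, Finset.mem_insert, Finset.mem_singleton] at h1 h2
  rcases h1 with h1|h1|h1|h1|h1 <;> rcases h2 with h2|h2|h2|h2|h2 <;> linarith
end

section
/- Under the same hypotheses (Q = {0,1,2,3,4}, g supported on {0,4} with g(0,4)=1, h antisymmetric, f with values in Q), for all x, y ∈ {1,2,3}: ĥ(0,4,x) = ĥ(0,4,y), where ĥ(a,b,c) = h(a,b)+h(b,c)+h(c,a). That is, the triple values of ĥ containing both 0 and 4 are all equal to a single constant β. -/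
lemma memQ_bound {m : ℤ} (h : m ∈ ({0,1,2,3,4} : Finset ℤ)) : 0 ≤ m ∧ m ≤ 4 := by
  fin_cases h <;> norm_num

theorem cychConstant
    (g h : ℤ → ℤ → ℤ) (f : ℤ → ℤ → ℤ → ℤ → ℤ → ℤ)
    (hg04 : g 0 4 = 1) (hg40 : g 4 0 = -1)
    (hg0 : ∀ x ∈ ({0,1,2,3,4} : Finset ℤ), ∀ y ∈ ({0,1,2,3,4} : Finset ℤ),
      ¬(x = 0 ∧ y = 4) → ¬(x = 4 ∧ y = 0) → g x y = 0)
    (hhanti : ∀ x ∈ ({0,1,2,3,4} : Finset ℤ), ∀ y ∈ ({0,1,2,3,4} : Finset ℤ), h x y = - h y x)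
    (hf : ∀ c u r d l : ℤ, f c u r d l =
      c + g c u + g c r + g c d + g c l + h u r + h r d + h d l + h l u)
    (hclose : ∀ c ∈ ({0,1,2,3,4} : Finset ℤ), ∀ u ∈ ({0,1,2,3,4} : Finset ℤ),
      ∀ r ∈ ({0,1,2,3,4} : Finset ℤ), ∀ d ∈ ({0,1,2,3,4} : Finset ℤ),
      ∀ l ∈ ({0,1,2,3,4} : Finset ℤ), f c u r d l ∈ ({0,1,2,3,4} : Finset ℤ))
    (x y : ℤ) (hx : x ∈ ({1,2,3} : Finset ℤ)) (hy : y ∈ ({1,2,3} : Finset ℤ)) :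
    h 0 4 + h 4 x + h x 0 = h 0 4 + h 4 y + h y 0 := by
  simp only [Finset.mem_insert, Finset.mem_singleton] at hx hy
  have h0Q : (0:ℤ) ∈ ({0,1,2,3,4} : Finset ℤ) := by norm_num
  have h4Q : (4:ℤ) ∈ ({0,1,2,3,4} : Finset ℤ) := by norm_num
  have hxQ : x ∈ ({0,1,2,3,4} : Finset ℤ) := by
    rcases hx with rfl|rfl|rfl <;> norm_num
  have hyQ : y ∈ ({0,1,2,3,4} : Finset ℤ) := by
    rcases hy with rfl|rfl|rfl <;> norm_num
  have hx0 : x ≠ 0 := by rcases hx with rfl|rfl|rfl <;> norm_num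
  have hx4 : x ≠ 4 := by rcases hx with rfl|rfl|rfl <;> norm_num
  have hy0 : y ≠ 0 := by rcases hy with rfl|rfl|rfl <;> norm_num
  have hy4 : y ≠ 4 := by rcases hy with rfl|rfl|rfl <;> norm_num
  -- g values vanish
  have g00 : g 0 0 = 0 := hg0 0 h0Q 0 h0Q (by norm_num) (by norm_num)
  have g44 : g 4 4 = 0 := hg0 4 h4Q 4 h4Q (by norm_num) (by norm_num)
  have g0x : g 0 x = 0 := hg0 0 h0Q x hxQ (by simp [hx4]) (by norm_num)
  have g0y : g 0 y = 0 := hg0 0 h0Q y hyQ (by simp [hy4]) (by norm_num)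
  have g4x : g 4 x = 0 := hg0 4 h4Q x hxQ (by norm_num) (by simp [hx0])
  have g4y : g 4 y = 0 := hg0 4 h4Q y hyQ (by norm_num) (by simp [hy0])
  -- antisymmetry facts
  have hyy : h y y = 0 := by have := hhanti y hyQ y hyQ; omega
  have haxy : h x y = - h y x := hhanti x hxQ y hyQ
  have hax0 : h x 0 = - h 0 x := hhanti x hxQ 0 h0Q
  have hay0 : h y 0 = - h 0 y := hhanti y hyQ 0 h0Q
  have hax4 : h x 4 = - h 4 x := hhanti x hxQ 4 h4Q
  have hay4 : h y 4 = - h 4 y := hhanti y hyQ 4 h4Q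
  -- claim A : h 0 x + h x y + h y 0 = 0
  have A : h 0 x + h x y + h y 0 = 0 := by
    have c1 := memQ_bound (hclose 0 h0Q 0 h0Q x hxQ y hyQ y hyQ)
    have c2 := memQ_bound (hclose 0 h0Q y hyQ y hyQ x hxQ 0 h0Q)
    rw [hf] at c1 c2
    rw [g00, g0x, g0y] at c1 c2
    have e1 : h 0 x + h x y + h y y + h y 0 ≥ 0 := by omega
    have e2 : h y y + h y x + h x 0 + h 0 y ≥ 0 := by omega
    rw [hyy] at e1 e2
    omega
  -- claim B : h 4 x + h x y + h y 4 = 0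
  have B : h 4 x + h x y + h y 4 = 0 := by
    have c1 := memQ_bound (hclose 4 h4Q 4 h4Q x hxQ y hyQ y hyQ)
    have c2 := memQ_bound (hclose 4 h4Q y hyQ y hyQ x hxQ 4 h4Q)
    rw [hf] at c1 c2
    rw [g44, g4x, g4y] at c1 c2
    have e1 : h 4 x + h x y + h y y + h y 4 ≤ 0 := by omega
    have e2 : h y y + h y x + h x 4 + h 4 y ≤ 0 := by omega
    rw [hyy] at e1 e2
    omega
  omega
end

section
/- Under the same hypotheses (Q = {0,1,2,3,4}, g supported on {0,4} with g(0,4)=1, h antisymmetric, f with values in Q), the constant β = ĥ(0,4,1) = h(0,4)+h(4,1)+h(1,0) satisfies -1 ≤ β ≤ 1. -/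
theorem betaBounds
    (g h : ℤ → ℤ → ℤ) (f : ℤ → ℤ → ℤ → ℤ → ℤ → ℤ)
    (hg04 : g 0 4 = 1) (hg40 : g 4 0 = -1)
    (hg0 : ∀ x ∈ ({0,1,2,3,4} : Finset ℤ), ∀ y ∈ ({0,1,2,3,4} : Finset ℤ),
      ¬(x = 0 ∧ y = 4) → ¬(x = 4 ∧ y = 0) → g x y = 0)
    (hhanti : ∀ x ∈ ({0,1,2,3,4} : Finset ℤ), ∀ y ∈ ({0,1,2,3,4} : Finset ℤ), h x y = - h y x)
    (hf : ∀ c u r d l : ℤ, f c u r d l =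
      c + g c u + g c r + g c d + g c l + h u r + h r d + h d l + h l u)
    (hclose : ∀ c ∈ ({0,1,2,3,4} : Finset ℤ), ∀ u ∈ ({0,1,2,3,4} : Finset ℤ),
      ∀ r ∈ ({0,1,2,3,4} : Finset ℤ), ∀ d ∈ ({0,1,2,3,4} : Finset ℤ),
      ∀ l ∈ ({0,1,2,3,4} : Finset ℤ), f c u r d l ∈ ({0,1,2,3,4} : Finset ℤ)) :
    -1 ≤ h 0 4 + h 4 1 + h 1 0 ∧ h 0 4 + h 4 1 + h 1 0 ≤ 1 := by
  have m0 : (0:ℤ) ∈ ({0,1,2,3,4} : Finset ℤ) := by decide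
  have m1 : (1:ℤ) ∈ ({0,1,2,3,4} : Finset ℤ) := by decide
  have m4 : (4:ℤ) ∈ ({0,1,2,3,4} : Finset ℤ) := by decide
  have h00 : h 0 0 = 0 := by have := hhanti 0 m0 0 m0; omega
  have h44 : h 4 4 = 0 := by have := hhanti 4 m4 4 m4; omega
  have g00 : g 0 0 = 0 := hg0 0 m0 0 m0 (by norm_num) (by norm_num)
  have g01 : g 0 1 = 0 := hg0 0 m0 1 m1 (by norm_num) (by norm_num)
  have g44 : g 4 4 = 0 := hg0 4 m4 4 m4 (by norm_num) (by norm_num)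
  have g41 : g 4 1 = 0 := hg0 4 m4 1 m1 (by norm_num) (by norm_num)
  have c1 := hclose 0 m0 0 m0 0 m0 4 m4 1 m1
  have c2 := hclose 4 m4 0 m0 4 m4 4 m4 1 m1
  rw [hf] at c1 c2
  simp only [Finset.mem_insert, Finset.mem_singleton] at c1 c2
  omega
end

section
/- Characterization theorem: if A is a 5-state non-trivial rotation-symmetric number-conserving CA on the von Neumann neighborhood (i.e., its local rule f on a 5-element state set Q ⊆ ℤ has the flow form with antisymmetric g, h, and f is not the identity on the center), then up to an affine renormalization of states, Q = {0,1,2,3,4} and there exists β ∈ {-1,0,1} such that f(c,u,r,d,l) = c + g(c,u)+g(c,r)+g(c,d)+g(c,l) + h(u,r)+h(r,d)+h(d,l)+h(l,u) with g(0,4)=1, g(4,0)=-1, g = 0 otherwise, and h(0,4)=β, h(4,0)=-β, h = 0 otherwise. -/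
/-- The canonical direct flow of the characterized 5-state RNCA. -/
def Gcanon : ℤ → ℤ → ℤ := fun x y =>
  if x = 0 ∧ y = 4 then 1 else if x = 4 ∧ y = 0 then -1 else 0

/-- The canonical indirect flow of the characterized 5-state RNCA. -/
def Hcanon (β : ℤ) : ℤ → ℤ → ℤ := fun x y =>
  if x = 0 ∧ y = 4 then β else if x = 4 ∧ y = 0 then -β else 0

lemma Hcanon_swap (β x y : ℤ) : Hcanon β x y = - Hcanon β y x := by
  unfold Hcanon
  split_ifs <;> first | ring1 | (exfalso; omega)

set_option maxHeartbeats 4000000 in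
/-- Characterization of 5-state non-trivial RNCA: up to the affine renormalization
`q ↦ (q - a) / α`, the state set is `{0,1,2,3,4}` and the rule is given by the
canonical flows `Gcanon` and `Hcanon β` with `β ∈ {-1,0,1}`. -/
theorem five_state_RNCA_characterization (Q : Finset ℤ) (hcard : Q.card = 5)
    (g h : ℤ → ℤ → ℤ) (f : ℤ → ℤ → ℤ → ℤ → ℤ → ℤ)
    (hganti : ∀ x ∈ Q, ∀ y ∈ Q, g x y = - g y x)
    (hhanti : ∀ x ∈ Q, ∀ y ∈ Q, h x y = - h y x)
    (hf : ∀ c u r d l : ℤ, f c u r d l =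
      c + g c u + g c r + g c d + g c l + h u r + h r d + h d l + h l u)
    (hclose : ∀ c ∈ Q, ∀ u ∈ Q, ∀ r ∈ Q, ∀ d ∈ Q, ∀ l ∈ Q, f c u r d l ∈ Q)
    (hnontriv : ∃ c ∈ Q, ∃ u ∈ Q, ∃ r ∈ Q, ∃ d ∈ Q, ∃ l ∈ Q, f c u r d l ≠ c) :
    ∃ a α β : ℤ, α ≠ 0 ∧ β ∈ ({-1, 0, 1} : Set ℤ) ∧
      Q = (Finset.range 5).image (fun i : ℕ => a + α * (i : ℤ)) ∧
      ∀ c ∈ Q, ∀ u ∈ Q, ∀ r ∈ Q, ∀ d ∈ Q, ∀ l ∈ Q,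
        f c u r d l = c + α *
          (Gcanon ((c - a) / α) ((u - a) / α) + Gcanon ((c - a) / α) ((r - a) / α) +
           Gcanon ((c - a) / α) ((d - a) / α) + Gcanon ((c - a) / α) ((l - a) / α) +
           Hcanon β ((u - a) / α) ((r - a) / α) + Hcanon β ((r - a) / α) ((d - a) / α) +
           Hcanon β ((d - a) / α) ((l - a) / α) + Hcanon β ((l - a) / α) ((u - a) / α)) := by
  have hQne : Q.Nonempty := Finset.card_pos.mp (by rw [hcard]; norm_num)
  have gxx : ∀ x ∈ Q, g x x = 0 := by
    intro x hx
    have := hganti x hx x hx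
    linarith
  -- basic closure consequence with l = r (indirect flow cancels)
  have claim1 : ∀ c ∈ Q, ∀ u ∈ Q, ∀ r ∈ Q, ∀ d ∈ Q,
      c + g c u + 2 * g c r + g c d ∈ Q := by
    intro c hc u hu r hr d hd
    have hmem := hclose c hc u hu r hr d hd r hr
    rw [hf] at hmem
    have h1 := hhanti u hu r hr
    have h2 := hhanti r hr d hd
    have heq : c + g c u + g c r + g c d + g c r + h u r + h r d + h d r + h r u
        = c + g c u + 2 * g c r + g c d := by linarith
    rwa [heq] at hmem
  -- if some flow g c n is nonzero, Q is the 5-term progression it generates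
  have hspread : ∀ c ∈ Q, ∀ n ∈ Q, g c n ≠ 0 →
      Q = (Finset.range 5).image (fun k : ℕ => c + g c n * (k : ℤ)) := by
    intro c hc n hn hs
    have hmem5 : ∀ k : ℤ, 0 ≤ k → k ≤ 4 → c + g c n * k ∈ Q := by
      intro k hk0 hk4
      interval_cases k
      · have he : c + g c n * 0 = c := by ring
        rw [he]; exact hc
      · have he : c + g c n * 1 = c + g c n + 2 * g c c + g c c := by
          rw [gxx c hc]; ring
        rw [he]; exact claim1 c hc n hn c hc c hc
      · have he : c + g c n * 2 = c + g c c + 2 * g c n + g c c := by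
          rw [gxx c hc]; ring
        rw [he]; exact claim1 c hc c hc n hn c hc
      · have he : c + g c n * 3 = c + g c n + 2 * g c n + g c c := by
          rw [gxx c hc]; ring
        rw [he]; exact claim1 c hc n hn n hn c hc
      · have he : c + g c n * 4 = c + g c n + 2 * g c n + g c n := by ring
        rw [he]; exact claim1 c hc n hn n hn n hn
    have hsub : (Finset.range 5).image (fun k : ℕ => c + g c n * (k : ℤ)) ⊆ Q := by
      intro x hx
      simp only [Finset.mem_image, Finset.mem_range] at hx
      obtain ⟨k, hk, rfl⟩ := hx
      exact hmem5 k (by omega) (by omega)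
    have hinj : Function.Injective (fun k : ℕ => c + g c n * (k : ℤ)) := by
      intro a b hab
      have hab' : c + g c n * (a : ℤ) = c + g c n * (b : ℤ) := hab
      have h2 : g c n * (a : ℤ) = g c n * (b : ℤ) := by linarith
      have := mul_left_cancel₀ hs h2
      exact_mod_cast this
    have hcardim : ((Finset.range 5).image (fun k : ℕ => c + g c n * (k : ℤ))).card = 5 := by
      rw [Finset.card_image_of_injective _ hinj, Finset.card_range]
    exact (Finset.eq_of_subset_of_card_le hsub (by rw [hcard, hcardim])).symm
  by_cases hg : ∀ c ∈ Q, ∀ n ∈ Q, g c n = 0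
  · -- all direct flows zero makes the rule trivial: contradiction
    exfalso
    obtain ⟨c, hc, u, hu, r, hr, d, hd, l, hl, hne⟩ := hnontriv
    have hH : ∀ x ∈ Q, x + (h u r + h r d + h d l + h l u) ∈ Q := by
      intro x hx
      have hm := hclose x hx u hu r hr d hd l hl
      rw [hf, hg x hx u hu, hg x hx r hr, hg x hx d hd, hg x hx l hl] at hm
      have heq : x + 0 + 0 + 0 + 0 + h u r + h r d + h d l + h l u
          = x + (h u r + h r d + h d l + h l u) := by ring
      rwa [heq] at hm
    have h1 : Q.max' hQne + (h u r + h r d + h d l + h l u) ≤ Q.max' hQne :=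
      Finset.le_max' Q _ (hH _ (Q.max'_mem hQne))
    have h2 : Q.min' hQne ≤ Q.min' hQne + (h u r + h r d + h d l + h l u) :=
      Finset.min'_le Q _ (hH _ (Q.min'_mem hQne))
    apply hne
    rw [hf, hg c hc u hu, hg c hc r hr, hg c hc d hd, hg c hc l hl]
    linarith
  · push_neg at hg
    obtain ⟨c0, hc0, n0, hn0, ht⟩ := hg
    set t := g c0 n0 with htdef
    have Qeq : Q = (Finset.range 5).image (fun k : ℕ => c0 + t * (k : ℤ)) := by
      have hq := hspread c0 hc0 n0 hn0 (by rwa [htdef] at ht)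
      rw [← htdef] at hq
      exact hq
    have hqmem : ∀ i : ℤ, 0 ≤ i → i ≤ 4 → c0 + t * i ∈ Q := by
      intro i h0 h4
      rw [Qeq]
      simp only [Finset.mem_image, Finset.mem_range]
      exact ⟨i.toNat, by omega, by rw [Int.toNat_of_nonneg h0]⟩
    have hidx : ∀ x ∈ Q, ∃ i : ℤ, 0 ≤ i ∧ i ≤ 4 ∧ x = c0 + t * i := by
      intro x hx
      rw [Qeq] at hx
      simp only [Finset.mem_image, Finset.mem_range] at hx
      obtain ⟨k, hk, he⟩ := hx
      exact ⟨(k : ℤ), by omega, by omega, he.symm⟩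
    have m0 : c0 + t * 0 ∈ Q := hqmem 0 (by norm_num) (by norm_num)
    have m1 : c0 + t * 1 ∈ Q := hqmem 1 (by norm_num) (by norm_num)
    have m2 : c0 + t * 2 ∈ Q := hqmem 2 (by norm_num) (by norm_num)
    have m3 : c0 + t * 3 ∈ Q := hqmem 3 (by norm_num) (by norm_num)
    have m4 : c0 + t * 4 ∈ Q := hqmem 4 (by norm_num) (by norm_num)
    have neq : ∀ i j : ℤ, i ≠ j → c0 + t * i ≠ c0 + t * j := by
      intro i j hij hEq
      have h1 : t * (i - j) = 0 := by linarith
      rcases mul_eq_zero.mp h1 with hh | hh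
      · exact ht hh
      · omega
    have nec0 : ∀ i : ℤ, i ≠ 0 → c0 + t * i ≠ c0 := by
      intro i hi hEq
      have h1 : t * i = 0 := by linarith
      rcases mul_eq_zero.mp h1 with hh | hh
      · exact ht hh
      · exact hi hh
    -- interior centers have no direct flow
    have gInt : ∀ i : ℤ, 1 ≤ i → i ≤ 3 → ∀ n ∈ Q, g (c0 + t * i) n = 0 := by
      intro i h1 h3 n hn
      by_contra hs
      have hQ2 := hspread (c0 + t * i) (hqmem i (by omega) (by omega)) n hn hs
      have hm0' := m0
      rw [hQ2] at hm0'
      simp only [Finset.mem_image, Finset.mem_range] at hm0'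
      obtain ⟨k, hk5, hkeq⟩ := hm0'
      have hm4' := m4
      rw [hQ2] at hm4'
      simp only [Finset.mem_image, Finset.mem_range] at hm4'
      obtain ⟨k', hk5', hkeq'⟩ := hm4'
      have e1 : g (c0 + t * i) n * (k : ℤ) = -(t * i) := by linarith
      have e2 : g (c0 + t * i) n * (k' : ℤ) = t * (4 - i) := by linarith
      have e3 : t * ((k : ℤ) * (4 - i) + (k' : ℤ) * i) = 0 := by
        linear_combination (k' : ℤ) * e1 - (k : ℤ) * e2
      rcases mul_eq_zero.mp e3 with hh | hh
      · exact ht hh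
      · have hnn1 : 0 ≤ (k : ℤ) * (4 - i) := mul_nonneg (by omega) (by omega)
        have hnn2 : 0 ≤ (k' : ℤ) * i := mul_nonneg (by omega) (by omega)
        have hz1 : (k : ℤ) * (4 - i) = 0 := by linarith
        rcases mul_eq_zero.mp hz1 with h' | h'
        · rw [h', mul_zero] at e1
          have h'' : t * i = 0 := by linarith
          rcases mul_eq_zero.mp h'' with h3' | h3'
          · exact ht h3'
          · omega
        · omega
    have g0 : ∀ n ∈ Q, n ≠ c0 + t * 4 → g c0 n = 0 := by
      intro n hn hn4
      obtain ⟨i, hi0, hi4, rfl⟩ := hidx n hn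
      have hine : i ≠ 4 := by
        intro hE; subst hE; exact hn4 rfl
      rcases (by omega : i = 0 ∨ (1 ≤ i ∧ i ≤ 3)) with rfl | ⟨ha, hb⟩
      · rw [show c0 + t * 0 = c0 from by ring]
        exact gxx c0 hc0
      · have hA := hganti c0 hc0 (c0 + t * i) (hqmem i (by omega) (by omega))
        rw [hA, gInt i ha hb c0 hc0]
        try norm_num
    have g04 : g c0 (c0 + t * 4) = t := by
      obtain ⟨i, hi0, hi4, hn0eq⟩ := hidx n0 hn0
      by_cases hi : i = 4
      · subst hi
        rw [← hn0eq]
        try exact htdef.symm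
      · exfalso
        apply ht
        rw [htdef]
        exact g0 n0 hn0 (by rw [hn0eq]; exact neq i 4 hi)
    have g4 : ∀ n ∈ Q, n ≠ c0 → g (c0 + t * 4) n = 0 := by
      intro n hn hnc
      obtain ⟨i, hi0, hi4, rfl⟩ := hidx n hn
      have hi0' : i ≠ 0 := by
        intro hE; subst hE; exact hnc (by ring)
      rcases (by omega : (1 ≤ i ∧ i ≤ 3) ∨ i = 4) with ⟨ha, hb⟩ | rfl
      · have hA := hganti (c0 + t * 4) m4 (c0 + t * i) (hqmem i (by omega) (by omega))
        rw [hA, gInt i ha hb (c0 + t * 4) m4]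
        try norm_num
      · exact gxx _ m4
    have g40 : g (c0 + t * 4) c0 = -t := by
      have hA := hganti c0 hc0 (c0 + t * 4) m4
      rw [g04] at hA
      linarith
    -- full table for g
    have gval : ∀ i j : ℤ, 0 ≤ i → i ≤ 4 → 0 ≤ j → j ≤ 4 →
        g (c0 + t * i) (c0 + t * j) = t * Gcanon i j := by
      intro i j hi0 hi4 hj0 hj4
      rcases (by omega : (i = 0 ∧ j = 4) ∨ (i = 4 ∧ j = 0) ∨
          (¬(i = 0 ∧ j = 4) ∧ ¬(i = 4 ∧ j = 0))) with ⟨rfl, rfl⟩ | ⟨rfl, rfl⟩ | ⟨h1, h2⟩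
      · norm_num [Gcanon]
        first
          | exact g04
          | (rw [show c0 + t * 0 = c0 from by ring]; exact g04)
          | linarith [g04]
      · norm_num [Gcanon]
        first
          | exact g40
          | (rw [show c0 + t * 0 = c0 from by ring]; exact g40)
          | linarith [g40]
      · have hG : Gcanon i j = 0 := by
          simp only [Gcanon]
          rw [if_neg h1, if_neg h2]
        rw [hG, mul_zero]
        rcases (by omega : i = 0 ∨ (1 ≤ i ∧ i ≤ 3) ∨ i = 4) with rfl | ⟨ha, hb⟩ | rfl
        · rw [show c0 + t * 0 = c0 from by ring]
          exact g0 _ (hqmem j hj0 hj4) (neq j 4 (by omega))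
        · exact gInt i ha hb _ (hqmem j hj0 hj4)
        · exact g4 _ (hqmem j hj0 hj4) (nec0 j (by omega))
    -- constraints on the indirect-flow cyclic sums
    have L1 : ∀ u ∈ Q, ∀ r ∈ Q, ∀ d ∈ Q, ∀ l ∈ Q, ∃ j : ℤ, -1 ≤ j ∧ j ≤ 1 ∧
        h u r + h r d + h d l + h l u = t * j := by
      intro u hu r hr d hd l hl
      have hA := hclose (c0 + t * 1) m1 u hu r hr d hd l hl
      rw [hf, gInt 1 (by norm_num) (by norm_num) u hu, gInt 1 (by norm_num) (by norm_num) r hr,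
        gInt 1 (by norm_num) (by norm_num) d hd, gInt 1 (by norm_num) (by norm_num) l hl] at hA
      obtain ⟨i, hi0, hi4, hieq⟩ := hidx _ hA
      have hB := hclose (c0 + t * 3) m3 u hu r hr d hd l hl
      rw [hf, gInt 3 (by norm_num) (by norm_num) u hu, gInt 3 (by norm_num) (by norm_num) r hr,
        gInt 3 (by norm_num) (by norm_num) d hd, gInt 3 (by norm_num) (by norm_num) l hl] at hB
      obtain ⟨i', hi0', hi4', hieq'⟩ := hidx _ hB
      have hz : t * (i - i' + 2) = 0 := by linarith
      rcases mul_eq_zero.mp hz with hh | hh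
      · exact absurd hh ht
      · exact ⟨i - 1, by omega, by omega, by linarith⟩
    have L2 : ∀ u ∈ Q, ∀ r ∈ Q, ∀ d ∈ Q, ∀ l ∈ Q,
        u ≠ c0 + t * 4 → r ≠ c0 + t * 4 → d ≠ c0 + t * 4 → l ≠ c0 + t * 4 →
        ∃ j : ℤ, 0 ≤ j ∧ j ≤ 4 ∧ h u r + h r d + h d l + h l u = t * j := by
      intro u hu r hr d hd l hl hu4 hr4 hd4 hl4
      have hA := hclose c0 hc0 u hu r hr d hd l hl
      rw [hf, g0 u hu hu4, g0 r hr hr4, g0 d hd hd4, g0 l hl hl4] at hA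
      obtain ⟨i, hi0, hi4, hieq⟩ := hidx _ hA
      exact ⟨i, hi0, hi4, by linarith⟩
    have L3 : ∀ u ∈ Q, ∀ r ∈ Q, ∀ d ∈ Q, ∀ l ∈ Q,
        u ≠ c0 → r ≠ c0 → d ≠ c0 → l ≠ c0 →
        ∃ j : ℤ, 0 ≤ j ∧ j ≤ 4 ∧ h u r + h r d + h d l + h l u = t * (j - 4) := by
      intro u hu r hr d hd l hl hu0 hr0 hd0 hl0
      have hA := hclose (c0 + t * 4) m4 u hu r hr d hd l hl
      rw [hf, g4 u hu hu0, g4 r hr hr0, g4 d hd hd0, g4 l hl hl0] at hA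
      obtain ⟨i, hi0, hi4, hieq⟩ := hidx _ hA
      exact ⟨i, hi0, hi4, by linarith⟩
    -- antisymmetry facts (in simp-normal argument form)
    have mA1 : c0 + t ∈ Q := by rw [show c0 + t = c0 + t * 1 from by ring]; exact m1
    have a01 : h c0 (c0 + t) = -h (c0 + t) c0 := hhanti _ hc0 _ mA1
    have a02 : h c0 (c0 + t * 2) = -h (c0 + t * 2) c0 := hhanti _ hc0 _ m2
    have a03 : h c0 (c0 + t * 3) = -h (c0 + t * 3) c0 := hhanti _ hc0 _ m3
    have a04 : h c0 (c0 + t * 4) = -h (c0 + t * 4) c0 := hhanti _ hc0 _ m4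
    have a12 : h (c0 + t) (c0 + t * 2) = -h (c0 + t * 2) (c0 + t) := hhanti _ mA1 _ m2
    have a13 : h (c0 + t) (c0 + t * 3) = -h (c0 + t * 3) (c0 + t) := hhanti _ mA1 _ m3
    have a14 : h (c0 + t) (c0 + t * 4) = -h (c0 + t * 4) (c0 + t) := hhanti _ mA1 _ m4
    have a23 : h (c0 + t * 2) (c0 + t * 3) = -h (c0 + t * 3) (c0 + t * 2) := hhanti _ m2 _ m3
    have a24 : h (c0 + t * 2) (c0 + t * 4) = -h (c0 + t * 4) (c0 + t * 2) := hhanti _ m2 _ m4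
    have a34 : h (c0 + t * 3) (c0 + t * 4) = -h (c0 + t * 4) (c0 + t * 3) := hhanti _ m3 _ m4
    have s0 : h c0 c0 = 0 := by have := hhanti _ hc0 _ hc0; linarith
    have s1 : h (c0 + t) (c0 + t) = 0 := by have := hhanti _ mA1 _ mA1; linarith
    have s2 : h (c0 + t * 2) (c0 + t * 2) = 0 := by have := hhanti _ m2 _ m2; linarith
    have s3 : h (c0 + t * 3) (c0 + t * 3) = 0 := by have := hhanti _ m3 _ m3; linarith
    have s4 : h (c0 + t * 4) (c0 + t * 4) = 0 := by have := hhanti _ m4 _ m4; linarith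
    have ne04 : c0 ≠ c0 + t * 4 := fun hE => ht (by linarith)
    have ne14 : c0 + t ≠ c0 + t * 4 := fun hE => ht (by linarith)
    have ne24 : c0 + t * 2 ≠ c0 + t * 4 := fun hE => ht (by linarith)
    have ne34 : c0 + t * 3 ≠ c0 + t * 4 := fun hE => ht (by linarith)
    have nc1 : c0 + t ≠ c0 := fun hE => ht (by linarith)
    have nc2 : c0 + t * 2 ≠ c0 := fun hE => ht (by linarith)
    have nc3 : c0 + t * 3 ≠ c0 := fun hE => ht (by linarith)
    have nc4 : c0 + t * 4 ≠ c0 := fun hE => ht (by linarith)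
    have v123 : h (c0 + t) (c0 + t * 2) + h (c0 + t * 2) (c0 + t * 3) + h (c0 + t * 3) (c0 + t) = 0 := by
      obtain ⟨j, hj0, hj4, hX⟩ := L2 _ mA1 _ mA1 _ m2 _ m3 ne14 ne14 ne24 ne34
      obtain ⟨j', hj0', hj4', hY⟩ := L3 _ mA1 _ mA1 _ m2 _ m3 nc1 nc1 nc2 nc3
      have hz : t * (j - j' + 4) = 0 := by linarith
      rcases mul_eq_zero.mp hz with hh | hh
      · exact absurd hh ht
      · have hj : j = 0 := by omega
        rw [hj] at hX
        linarith
    have v012 : h c0 (c0 + t) + h (c0 + t) (c0 + t * 2) + h (c0 + t * 2) c0 = 0 := by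
      obtain ⟨ja, hj0, hj4, hX⟩ := L2 _ mA1 _ hc0 _ m2 _ m3 ne14 ne04 ne24 ne34
      obtain ⟨jb, hj0', hj4', hY⟩ := L2 _ hc0 _ hc0 _ mA1 _ m2 ne04 ne04 ne14 ne24
      have hz : t * (ja + jb) = 0 := by linarith
      rcases mul_eq_zero.mp hz with hh | hh
      · exact absurd hh ht
      · have hj : jb = 0 := by omega
        rw [hj] at hY
        linarith
    have v013 : h c0 (c0 + t) + h (c0 + t) (c0 + t * 3) + h (c0 + t * 3) c0 = 0 := by
      obtain ⟨ja, hj0, hj4, hX⟩ := L2 _ mA1 _ hc0 _ m3 _ m2 ne14 ne04 ne34 ne24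
      obtain ⟨jb, hj0', hj4', hY⟩ := L2 _ hc0 _ hc0 _ mA1 _ m3 ne04 ne04 ne14 ne34
      have hz : t * (ja + jb) = 0 := by linarith
      rcases mul_eq_zero.mp hz with hh | hh
      · exact absurd hh ht
      · have hj : jb = 0 := by omega
        rw [hj] at hY
        linarith
    have v023 : h c0 (c0 + t * 2) + h (c0 + t * 2) (c0 + t * 3) + h (c0 + t * 3) c0 = 0 := by
      obtain ⟨ja, hj0, hj4, hX⟩ := L2 _ m2 _ hc0 _ m3 _ mA1 ne24 ne04 ne34 ne14
      obtain ⟨jb, hj0', hj4', hY⟩ := L2 _ hc0 _ hc0 _ m2 _ m3 ne04 ne04 ne24 ne34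
      have hz : t * (ja + jb) = 0 := by linarith
      rcases mul_eq_zero.mp hz with hh | hh
      · exact absurd hh ht
      · have hj : jb = 0 := by omega
        rw [hj] at hY
        linarith
    have v124 : h (c0 + t) (c0 + t * 2) + h (c0 + t * 2) (c0 + t * 4) + h (c0 + t * 4) (c0 + t) = 0 := by
      obtain ⟨ja, hj0, hj4, hX⟩ := L3 _ mA1 _ m4 _ m2 _ m3 nc1 nc4 nc2 nc3
      obtain ⟨jb, hj0', hj4', hY⟩ := L3 _ m4 _ m4 _ mA1 _ m2 nc4 nc4 nc1 nc2
      have hz : t * (ja + jb - 8) = 0 := by linarith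
      rcases mul_eq_zero.mp hz with hh | hh
      · exact absurd hh ht
      · have hj : jb = 4 := by omega
        rw [hj] at hY
        linarith
    have v134 : h (c0 + t) (c0 + t * 3) + h (c0 + t * 3) (c0 + t * 4) + h (c0 + t * 4) (c0 + t) = 0 := by
      obtain ⟨ja, hj0, hj4, hX⟩ := L3 _ mA1 _ m4 _ m3 _ m2 nc1 nc4 nc3 nc2
      obtain ⟨jb, hj0', hj4', hY⟩ := L3 _ m4 _ m4 _ mA1 _ m3 nc4 nc4 nc1 nc3
      have hz : t * (ja + jb - 8) = 0 := by linarith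
      rcases mul_eq_zero.mp hz with hh | hh
      · exact absurd hh ht
      · have hj : jb = 4 := by omega
        rw [hj] at hY
        linarith
    have v234 : h (c0 + t * 2) (c0 + t * 3) + h (c0 + t * 3) (c0 + t * 4) + h (c0 + t * 4) (c0 + t * 2) = 0 := by
      obtain ⟨ja, hj0, hj4, hX⟩ := L3 _ m2 _ m4 _ m3 _ mA1 nc2 nc4 nc3 nc1
      obtain ⟨jb, hj0', hj4', hY⟩ := L3 _ m4 _ m4 _ m2 _ m3 nc4 nc4 nc2 nc3
      have hz : t * (ja + jb - 8) = 0 := by linarith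
      rcases mul_eq_zero.mp hz with hh | hh
      · exact absurd hh ht
      · have hj : jb = 4 := by omega
        rw [hj] at hY
        linarith
    obtain ⟨e, he1, he2, hE⟩ := L1 _ hc0 _ hc0 _ mA1 _ m4
    have v014 : h c0 (c0 + t) + h (c0 + t) (c0 + t * 4) + h (c0 + t * 4) c0 = t * e := by linarith
    have v024 : h c0 (c0 + t * 2) + h (c0 + t * 2) (c0 + t * 4) + h (c0 + t * 4) c0 = t * e := by linarith [v124, v014, v012]
    have v034 : h c0 (c0 + t * 3) + h (c0 + t * 3) (c0 + t * 4) + h (c0 + t * 4) c0 = t * e := by linarith [v134, v014, v013]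
    -- the full table of cyclic triple sums
    have Cval : ∀ i j k : ℤ, 0 ≤ i → i ≤ 4 → 0 ≤ j → j ≤ 4 → 0 ≤ k → k ≤ 4 →
        h (c0 + t * i) (c0 + t * j) + h (c0 + t * j) (c0 + t * k)
          + h (c0 + t * k) (c0 + t * i)
        = t * (Hcanon (-e) i j + Hcanon (-e) j k + Hcanon (-e) k i) := by
      intro i j k hi0 hi4 hj0 hj4 hk0 hk4
      interval_cases i <;> interval_cases j <;> interval_cases k <;>
        · simp only [Hcanon]
          norm_num
          linarith only [s0, s1, s2, s3, s4, a01, a02, a03, a04, a12, a13, a14, a23, a24, a34,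
            v012, v013, v023, v123, v124, v134, v234, v014, v024, v034]
    have hdiv : ∀ i : ℤ, (c0 + t * i - c0) / t = i := by
      intro i
      rw [show c0 + t * i - c0 = t * i from by ring, Int.mul_ediv_cancel_left i ht]
    refine ⟨c0, t, -e, ht, ?_, Qeq, ?_⟩
    · simp only [Set.mem_insert_iff, Set.mem_singleton_iff]
      omega
    · intro c hc u hu r hr d hd l hl
      obtain ⟨ic, hic0, hic4, rfl⟩ := hidx c hc
      obtain ⟨iu, hiu0, hiu4, rfl⟩ := hidx u hu
      obtain ⟨ir, hir0, hir4, rfl⟩ := hidx r hr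
      obtain ⟨idd, hid0, hid4, rfl⟩ := hidx d hd
      obtain ⟨il, hil0, hil4, rfl⟩ := hidx l hl
      rw [hf]
      simp only [hdiv]
      linear_combination (gval ic iu hic0 hic4 hiu0 hiu4) + (gval ic ir hic0 hic4 hir0 hir4) +
        (gval ic idd hic0 hic4 hid0 hid4) + (gval ic il hic0 hic4 hil0 hil4) +
        (Cval iu ir idd hiu0 hiu4 hir0 hir4 hid0 hid4) +
        (Cval iu idd il hiu0 hiu4 hid0 hid4 hil0 hil4) -
        (hhanti _ hd _ hu) + t * (Hcanon_swap (-e) idd iu)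
end
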